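/- arXiv:1908.10475 — 6 statements merged into one kernel-verified Lean document; each statement's English description precedes it below -/
import Mathlib

section
/- Let C be a finite set of size k and let ω, η be distributions on C such that η is more equitable than ω (i.e. there exists α with η(α) > ω(α) such that η(α) ≤ η(β) for every β with η(β) < ω(β)). Then there exists an index ℓ ∈ {1,…,k} such that ω*(i) ≤ η*(i) for all 1 ≤ i ≤ ℓ, and there is a color α with η(α) > ω(α) satisfying ∑_{i=1}^ℓ η*(i) − ∑_{i=1}^ℓ ω*(i) ≥ η(α) − ω(α). -/
/-!
Enumerate the colors in nondecreasing order of `η` so that `α` comes first among the colors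
of value `η α`, say at position `ℓ`. The colors before `α` have `η`-value below `η α`, so none
of them lies in `D⁻(ω, η)`: on the first `ℓ + 1` colors `ω ≤ η`. For `i ≤ ℓ` the first `i + 1`
of them are `i + 1` colors with `ω ≤ η*(i)`, whence `ω*(i) ≤ η*(i)`; and the `ℓ + 1` smallest
values of `ω` sum to at most the `ω`-mass of these colors, so the difference of partial sums
dominates `∑ (η - ω)` over them, a sum of nonnegative terms containing `η α - ω α`.
-/

open Finset

theorem Finset.sum_le_sum_of_card_eq_of_sdiff_le {ι M : Type*} [DecidableEq ι]
    [AddCommMonoid M] [PartialOrder M] [IsOrderedAddMonoid M] {s t : Finset ι} {f : ι → M}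
    (c : M) (hst : #s = #t) (hs : ∀ i ∈ s \ t, f i ≤ c) (ht : ∀ j ∈ t \ s, c ≤ f j) :
    ∑ i ∈ s, f i ≤ ∑ i ∈ t, f i :=
  calc ∑ i ∈ s, f i ≤ ∑ i ∈ s ∩ t, f i + #(s \ t) • c := by
        rw [← sum_inter_add_sum_sdiff s t]
        gcongr
        exact sum_le_card_nsmul _ _ _ hs
    _ = ∑ i ∈ t ∩ s, f i + #(t \ s) • c := by rw [inter_comm, card_sdiff_comm hst]
    _ ≤ ∑ i ∈ t, f i := by
        rw [← sum_inter_add_sum_sdiff t s]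
        gcongr
        exact card_nsmul_le_sum _ _ _ ht

theorem Monotone.sum_Iic_le_sum_of_card_eq {ι M : Type*} [LinearOrder ι]
    [LocallyFiniteOrderBot ι] [AddCommMonoid M] [PartialOrder M] [IsOrderedAddMonoid M]
    {f : ι → M} (hf : Monotone f) (ℓ : ι) {t : Finset ι} (ht : #t = #(Iic ℓ)) :
    ∑ i ∈ Iic ℓ, f i ≤ ∑ i ∈ t, f i :=
  sum_le_sum_of_card_eq_of_sdiff_le (f ℓ) ht.symm
    (fun _ hi => hf (mem_Iic.1 (mem_sdiff.1 hi).1))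
    (fun _ hj => hf (not_le.1 fun h => (mem_sdiff.1 hj).2 (mem_Iic.2 h)).le)

theorem Monotone.le_of_card_Iio_lt {ι α : Type*} [LinearOrder ι] [LocallyFiniteOrderBot ι]
    [Preorder α] {f : ι → α} (hf : Monotone f) {i : ι} {t : Finset ι} (ht : #(Iio i) < #t)
    {c : α} (hc : ∀ j ∈ t, f j ≤ c) : f i ≤ c := by
  obtain ⟨j, hj, hij⟩ : ∃ j ∈ t, i ≤ j := by
    by_contra! h
    exact ht.not_ge (card_le_card fun j hj => mem_Iio.2 (h j hj))
  exact (hf hij).trans (hc j hj)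

section Rearrangement

variable {C : Type*} {k : ℕ}

theorem apply_le_of_forall_Iic_apply_le {α : Type*} [Preorder α] {f : C → α}
    {σ : Fin k ≃ C} (hf : Monotone (f ∘ σ)) (ρ : Fin k ≃ C) {i : Fin k} {c : α}
    (hc : ∀ j ≤ i, f (ρ j) ≤ c) : f (σ i) ≤ c := by
  refine hf.le_of_card_Iio_lt (t := (Iic i).map (ρ.trans σ.symm).toEmbedding) ?_ ?_
  · simp
  · simpa using hc

theorem sum_Iic_le_sum_Iic_of_monotone {M : Type*} [AddCommMonoid M] [PartialOrder M]
    [IsOrderedAddMonoid M] {f : C → M} {σ : Fin k ≃ C} (hf : Monotone (f ∘ σ))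
    (ρ : Fin k ≃ C) (ℓ : Fin k) :
    ∑ i ∈ Iic ℓ, f (σ i) ≤ ∑ i ∈ Iic ℓ, f (ρ i) := by
  simpa using hf.sum_Iic_le_sum_of_card_eq ℓ
    (t := (Iic ℓ).map (ρ.trans σ.symm).toEmbedding) (card_map _)

-- `ρ` is `τ` composed with the transposition moving `a` to the front of its block of ties.
theorem exists_equiv_comp_eq_and_apply_eq {β : Type*} [LinearOrder β] {η : C → β} {τ : Fin k ≃ C}
    (hη : Monotone (η ∘ τ)) (a : C) :
    ∃ ρ : Fin k ≃ C, ∃ ℓ, η ∘ ρ = η ∘ τ ∧ ρ ℓ = a ∧ ∀ j < ℓ, η (ρ j) < η a := by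
  classical
  set m := τ.symm a
  set S := univ.filter fun i => η a ≤ η (τ i)
  have hmS : m ∈ S := by simp [S, m]
  set ℓ := S.min' ⟨m, hmS⟩
  have hℓ : η a ≤ η (τ ℓ) := (mem_filter.1 (S.min'_mem ⟨m, hmS⟩)).2
  have hℓm : η (τ ℓ) = η (τ m) :=
    le_antisymm (hη (S.min'_le m hmS)) (by simpa [m] using hℓ)
  have hbelow : ∀ j < ℓ, η (τ j) < η a := fun j hj =>
    not_le.1 fun h => (S.min'_le j (by simp [S, h])).not_gt hj
  refine ⟨(Equiv.swap ℓ m).trans τ, ℓ, ?_, by simp [m], fun j hj => ?_⟩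
  · funext j
    simp only [Function.comp_apply, Equiv.trans_apply, Equiv.swap_apply_def]
    split_ifs with h₁ h₂ <;> simp_all
  · have hjm : j ≠ m := fun h => (hbelow j hj).ne (by simp [h, m])
    simpa [Equiv.swap_apply_of_ne_of_ne hj.ne hjm] using hbelow j hj

end Rearrangement

theorem stmt_1_general {C : Type*} {k : ℕ}
    (ω η : C → ℝ)
    (hME : ∃ α, ω α < η α ∧ ∀ β, η β < ω β → η α ≤ η β)
    (ωst ηst : Fin k → ℝ) (σ τ : Fin k ≃ C)
    (hσ : ωst = ω ∘ σ) (hτ : ηst = η ∘ τ)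
    (hmono₁ : Monotone ωst) (hmono₂ : Monotone ηst) :
    ∃ ℓ : Fin k, (∀ i, i ≤ ℓ → ωst i ≤ ηst i) ∧
      ∃ α, ω α < η α ∧
        η α - ω α ≤ ∑ i ∈ Finset.Iic ℓ, ηst i - ∑ i ∈ Finset.Iic ℓ, ωst i := by
  subst hσ hτ
  obtain ⟨α, hα, hmin⟩ := hME
  obtain ⟨ρ, ℓ, hρ, hρℓ, hbelow⟩ := exists_equiv_comp_eq_and_apply_eq hmono₂ α
  have hηρ (j : Fin k) : η (ρ j) = η (τ j) := congrFun hρ j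
  have hle : ∀ j ≤ ℓ, ω (ρ j) ≤ η (ρ j) := by
    intro j hj
    rcases hj.lt_or_eq with hj | rfl
    · exact not_lt.1 fun h => (hmin _ h).not_gt (hbelow j hj)
    · exact hρℓ ▸ hα.le
  refine ⟨ℓ, fun i hi => apply_le_of_forall_Iic_apply_le hmono₁ ρ fun j hj => ?_, α, hα, ?_⟩
  · exact (hle j (hj.trans hi)).trans ((hηρ j).trans_le (hmono₂ hj))
  · calc η α - ω α = η (ρ ℓ) - ω (ρ ℓ) := by rw [hρℓ]
      _ ≤ ∑ j ∈ Iic ℓ, (η (ρ j) - ω (ρ j)) :=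
          single_le_sum (fun j hj => sub_nonneg.2 (hle j (mem_Iic.1 hj))) (mem_Iic.2 le_rfl)
      _ = ∑ j ∈ Iic ℓ, η (τ j) - ∑ j ∈ Iic ℓ, ω (ρ j) := by simp only [sum_sub_distrib, hηρ]
      _ ≤ ∑ j ∈ Iic ℓ, η (τ j) - ∑ j ∈ Iic ℓ, ω (σ j) :=
          sub_le_sub_left (sum_Iic_le_sum_Iic_of_monotone hmono₁ ρ ℓ) _

/-- If η is more equitable than ω, then there is an index ℓ such that the
nondecreasing rearrangements satisfy ω*(i) ≤ η*(i) for all i ≤ ℓ, and a color α with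
η(α) > ω(α) such that the difference of the partial sums up to ℓ is at least η(α) − ω(α). -/
theorem stmt_1 {C : Type*} [Fintype C] {k : ℕ} (hk : Fintype.card C = k)
    (ω η : C → ℝ)
    (hω0 : ∀ α, 0 ≤ ω α) (hω1 : ∀ α, ω α ≤ 1) (hωsum : ∑ α, ω α = 1)
    (hη0 : ∀ α, 0 ≤ η α) (hη1 : ∀ α, η α ≤ 1) (hηsum : ∑ α, η α = 1)
    (hME : ∃ α, ω α < η α ∧ ∀ β, η β < ω β → η α ≤ η β)
    (ωst ηst : Fin k → ℝ) (σ τ : Fin k ≃ C)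
    (hσ : ωst = ω ∘ σ) (hτ : ηst = η ∘ τ)
    (hmono₁ : Monotone ωst) (hmono₂ : Monotone ηst) :
    ∃ ℓ : Fin k, (∀ i, i ≤ ℓ → ωst i ≤ ηst i) ∧
      ∃ α, ω α < η α ∧
        η α - ω α ≤ ∑ i ∈ Finset.Iic ℓ, ηst i - ∑ i ∈ Finset.Iic ℓ, ωst i :=
  stmt_1_general ω η hME ωst ηst σ τ hσ hτ hmono₁ hmono₂
end

section
/- Let C be a finite set of size k and let (ω_n)_{n≥0} be a sequence of distributions on C such that for every n, either ω_{n+1} = ω_n or ω_{n+1} is more equitable than ω_n. Suppose there is a real number A ≥ 1 such that for every n and every color α with ω_{n+1}(α) > ω_n(α), one has ‖ω_{n+1} − ω_n‖₁ ≤ A·(ω_{n+1}(α) − ω_n(α)). Then ∑_{n=0}^∞ ‖ω_{n+1} − ω_n‖₁ ≤ ((1+A)^{k+1}/A)·disc(ω₀), where disc(ω) = max_{α∈C} |ω(α) − 1/k|. -/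
/-!
Write `S_j ω` for the sum of the `j` smallest values of `ω` and use the potential
`Ψ ω = ∑_{i < k-1} A (1+A)^i S_{k-1-i} ω`. In a more equitable step with gain `g` at `α`, let `T`
be `α` together with the colours lying below `α` after the step; none of them loses weight, so
`S_j` does not decrease for `j ≤ |T|` and `S_{|T|}` grows by at least `g`, while no `S_j` drops by
more than half the `ℓ¹`-size `L` of the step. As `L ≤ A g`, the geometric weights make `Ψ` grow by
at least `L`. On the other hand `S_j ≤ j / k` for every distribution and
`S_j ω₀ ≥ j (1/k - disc ω₀)`, so the total growth of `Ψ` is at most `(1+A)^k / A · disc ω₀`.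
-/

open Finset

noncomputable def sumSmallest {C : Type*} [Fintype C] (j : ℕ) (ω : C → ℝ) : ℝ :=
  if h : j ≤ Fintype.card C then
    (powersetCard j univ).inf' (powersetCard_nonempty.2 (by rwa [card_univ])) fun V => ∑ β ∈ V, ω β
  else 0

section sumSmallest

variable {C : Type*} [Fintype C] {j : ℕ} {ω ω' : C → ℝ}

theorem sumSmallest_le_sum {V : Finset C} (hV : #V = j) : sumSmallest j ω ≤ ∑ β ∈ V, ω β := by
  have hj : j ≤ Fintype.card C := hV ▸ card_le_univ V
  rw [sumSmallest, dif_pos hj]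
  exact inf'_le _ (mem_powersetCard.2 ⟨subset_univ V, hV⟩)

theorem exists_sum_eq_sumSmallest (ω : C → ℝ) (hj : j ≤ Fintype.card C) :
    ∃ V : Finset C, #V = j ∧ ∑ β ∈ V, ω β = sumSmallest j ω := by
  rw [sumSmallest, dif_pos hj]
  obtain ⟨V, hV, hmin⟩ := exists_mem_eq_inf' (s := powersetCard j univ)
    (powersetCard_nonempty.2 (by rwa [card_univ]))
    fun V : Finset C => ∑ β ∈ V, ω β
  exact ⟨V, (mem_powersetCard.1 hV).2, hmin.symm⟩

theorem mul_le_sumSmallest {c : ℝ} (hj : j ≤ Fintype.card C) (hc : ∀ β, c ≤ ω β) :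
    j * c ≤ sumSmallest j ω := by
  obtain ⟨V, hV, hmin⟩ := exists_sum_eq_sumSmallest ω hj
  simpa [← hmin, hV] using card_nsmul_le_sum V ω c fun β _ => hc β

theorem le_of_sum_eq_sumSmallest {V : Finset C} (hV : #V = j)
    (hmin : ∑ β ∈ V, ω β = sumSmallest j ω) {γ β : C} (hγ : γ ∈ V) (hβ : β ∉ V) :
    ω γ ≤ ω β := by
  classical
  by_contra! hlt
  have hβ' : β ∉ V.erase γ := fun h => hβ (mem_of_mem_erase h)
  have hcard : #(insert β (V.erase γ)) = j := by
    rw [card_insert_of_notMem hβ', card_erase_of_mem hγ, ← hV]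
    exact Nat.sub_add_cancel (card_pos.2 ⟨γ, hγ⟩)
  have hswap := sumSmallest_le_sum (ω := ω) hcard
  rw [sum_insert hβ', sum_erase_eq_sub hγ] at hswap
  linarith

theorem card_mul_sumSmallest_le (ω : C → ℝ) (hj : j ≤ Fintype.card C) :
    Fintype.card C * sumSmallest j ω ≤ j * ∑ β, ω β := by
  classical
  obtain ⟨V, hV, hmin⟩ := exists_sum_eq_sumSmallest ω hj
  -- every value on `V` is at most every value off `V`; sum this over all pairs
  have hpairs : ∑ γ ∈ V, ∑ _β ∈ Vᶜ, ω γ ≤ ∑ γ ∈ V, ∑ β ∈ Vᶜ, ω β :=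
    sum_le_sum fun γ hγ => sum_le_sum fun β hβ =>
      le_of_sum_eq_sumSmallest hV hmin hγ (mem_compl.1 hβ)
  have hcompl := sum_compl_add_sum V ω
  simp only [sum_const, card_compl, nsmul_eq_mul, ← mul_sum, hV, hmin] at hpairs
  rw [Nat.cast_sub hj] at hpairs
  nlinarith

theorem sumSmallest_sub_sumSmallest_le (hj : j ≤ Fintype.card C) :
    sumSmallest j ω - sumSmallest j ω' ≤ ∑ β, max (ω β - ω' β) 0 := by
  obtain ⟨W, hW, hmin⟩ := exists_sum_eq_sumSmallest ω' hj
  calc sumSmallest j ω - sumSmallest j ω' ≤ ∑ β ∈ W, ω β - ∑ β ∈ W, ω' β := by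
        rw [hmin]; linarith [sumSmallest_le_sum (ω := ω) hW]
    _ = ∑ β ∈ W, (ω β - ω' β) := (sum_sub_distrib ..).symm
    _ ≤ ∑ β ∈ W, max (ω β - ω' β) 0 := sum_le_sum fun β _ => le_max_left _ _
    _ ≤ ∑ β, max (ω β - ω' β) 0 :=
        sum_le_sum_of_subset_of_nonneg (subset_univ W) fun β _ _ => le_max_right _ _

theorem exists_subset_sum_eq_sumSmallest {T : Finset C} {t : ℝ} (hT : ∀ γ ∈ T, ω γ ≤ t)
    (hTc : ∀ β ∉ T, t ≤ ω β) (hj : j ≤ #T) :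
    ∃ V ⊆ T, #V = j ∧ ∑ β ∈ V, ω β = sumSmallest j ω := by
  classical
  obtain ⟨W, hW, hmin⟩ := exists_sum_eq_sumSmallest ω (hj.trans (card_le_univ T))
  obtain ⟨V, hWV, hVT, hV⟩ := exists_subsuperset_card_eq (inter_subset_right : W ∩ T ⊆ T)
    ((card_le_card inter_subset_left).trans_eq hW) hj
  -- trade the elements of `W` outside `T` for elements of `T`, which are no larger
  have hcard : #(V \ W) = #(W \ V) := card_sdiff_comm (hV.trans hW.symm)
  have hin : ∑ β ∈ V \ W, ω β ≤ #(V \ W) • t :=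
    sum_le_card_nsmul _ _ _ fun β hβ => hT β (hVT (mem_sdiff.1 hβ).1)
  have hout : #(W \ V) • t ≤ ∑ β ∈ W \ V, ω β :=
    card_nsmul_le_sum _ _ _ fun β hβ => hTc β fun hβT =>
      (mem_sdiff.1 hβ).2 (hWV (mem_inter.2 ⟨(mem_sdiff.1 hβ).1, hβT⟩))
  have hswap := sum_sdiff_sub_sum_sdiff (s₁ := W) (s₂ := V) (f := ω)
  refine ⟨V, hVT, hV, le_antisymm ?_ (sumSmallest_le_sum hV)⟩
  rw [hcard] at hin
  rw [← hmin]
  linarith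

theorem sum_max_sub_eq_half (hsum : ∑ β, ω β = ∑ β, ω' β) :
    ∑ β, max (ω β - ω' β) 0 = (∑ β, |ω' β - ω β|) / 2 := by
  have hpt : ∀ β, max (ω β - ω' β) 0 = (|ω' β - ω β| + (ω β - ω' β)) / 2 := by
    intro β
    rcases le_total (ω β) (ω' β) with h | h
    · rw [max_eq_right (by linarith), abs_of_nonneg (by linarith)]; ring
    · rw [max_eq_left (by linarith), abs_of_nonpos (by linarith)]; ring
  simp only [hpt, ← sum_div, sum_add_distrib, sum_sub_distrib, hsum, sub_self, add_zero]

end sumSmallest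

theorem sq_mul_sum_range_add (A : ℝ) (m : ℕ) :
    A ^ 2 * ∑ i ∈ range m, ((m - i : ℕ) : ℝ) * (1 + A) ^ i + A * (m + 1) + 1 =
      (1 + A) ^ (m + 1) := by
  induction m with
  | zero => simp [add_comm]
  | succ m ih =>
    rw [sum_range_succ']
    simp only [Nat.add_sub_add_right, pow_succ, pow_zero, Nat.sub_zero, ← mul_assoc, ← sum_mul]
    push_cast at ih ⊢
    linear_combination (1 + A) * ih

theorem le_sum_range_mul_geom {A L g : ℝ} {x : ℕ → ℝ} {m p : ℕ} (hA : 0 ≤ A) (hL0 : 0 ≤ L)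
    (hL : L ≤ A * g) (hpm : p < m) (hbefore : ∀ i < p, -(L / 2) ≤ x i) (hat : g ≤ x p)
    (hafter : ∀ i, p < i → i < m → 0 ≤ x i) :
    L ≤ ∑ i ∈ range m, A * (1 + A) ^ i * x i := by
  have hw : ∀ i, 0 ≤ A * (1 + A) ^ i := fun i => by positivity
  have hgeom : ∑ i ∈ range p, A * (1 + A) ^ i = (1 + A) ^ p - 1 := by
    rw [← geom_sum_mul, sum_mul]
    exact sum_congr rfl fun i _ => by ring
  have hpow : 1 ≤ (1 + A) ^ p := one_le_pow₀ (by linarith)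
  calc L ≤ -(L / 2) * ((1 + A) ^ p - 1) + (1 + A) ^ p * (A * g) := by nlinarith
    _ = ∑ i ∈ range p, A * (1 + A) ^ i * (-(L / 2)) + A * (1 + A) ^ p * g := by
        rw [← sum_mul, hgeom]; ring
    _ ≤ ∑ i ∈ range (p + 1), A * (1 + A) ^ i * x i := by
        rw [sum_range_succ]
        gcongr with i hi
        exact hbefore i (mem_range.1 hi)
    _ ≤ ∑ i ∈ range m, A * (1 + A) ^ i * x i :=
        sum_le_sum_of_subset_of_nonneg (range_subset_range.2 hpm) fun i hi hi' =>
          mul_nonneg (hw i) (hafter i (by rw [mem_range] at hi'; omega) (mem_range.1 hi))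

theorem summable_and_tsum_le_of_le_sub {a Ψ : ℕ → ℝ} {B : ℝ} (ha : ∀ n, 0 ≤ a n)
    (hΨ : ∀ n, a n ≤ Ψ (n + 1) - Ψ n) (hB : ∀ n, Ψ n - Ψ 0 ≤ B) :
    Summable a ∧ ∑' n, a n ≤ B := by
  have hpartial : ∀ n, ∑ i ∈ range n, a i ≤ B := fun n =>
    (sum_le_sum fun i _ => hΨ i).trans ((sum_range_sub Ψ n).trans_le (hB n))
  have hsum := summable_of_sum_range_le ha hpartial
  exact ⟨hsum, hsum.tsum_le_of_sum_range_le hpartial⟩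

noncomputable def potential {C : Type*} [Fintype C] (A : ℝ) (m : ℕ) (ω : C → ℝ) : ℝ :=
  ∑ i ∈ range m, A * (1 + A) ^ i * sumSmallest (m - i) ω

section potential

variable {C : Type*} [Fintype C] {ω ω' : C → ℝ} {A : ℝ}

theorem potential_sub_potential (m : ℕ) :
    potential A m ω' - potential A m ω =
      ∑ i ∈ range m, A * (1 + A) ^ i * (sumSmallest (m - i) ω' - sumSmallest (m - i) ω) := by
  simp only [potential, ← sum_sub_distrib, mul_sub]

theorem le_potential_sub_potential (hA : 0 ≤ A) (hsum : ∑ β, ω β = ∑ β, ω' β) {α : C}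
    (hα : ω α < ω' α) (hmore : ∀ β, ω' β < ω β → ω' α ≤ ω' β)
    (hL : ∑ β, |ω' β - ω β| ≤ A * (ω' α - ω α)) :
    ∑ β, |ω' β - ω β| ≤
      potential A (Fintype.card C - 1) ω' - potential A (Fintype.card C - 1) ω := by
  classical
  set T := insert α (univ.filter fun β => ω' β < ω' α)
  have hαT : α ∈ T := mem_insert_self _ _
  have hT : ∀ γ ∈ T, ω' γ ≤ ω' α := by
    intro γ hγ
    rcases mem_insert.1 hγ with rfl | hγ
    · exact le_rfl
    · exact (mem_filter.1 hγ).2.le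
  have hTc : ∀ β ∉ T, ω' α ≤ ω' β := fun β hβ =>
    not_lt.1 fun h => hβ (mem_insert_of_mem (mem_filter.2 ⟨mem_univ β, h⟩))
  have hgain : ∀ γ ∈ T, ω γ ≤ ω' γ := by
    intro γ hγ
    by_contra! hlt
    have := hmore γ hlt
    rcases mem_insert.1 hγ with rfl | hγ
    · linarith
    · linarith [(mem_filter.1 hγ).2]
  obtain ⟨β₀, hβ₀⟩ : ∃ β, ω' β < ω β := by
    by_contra! hle
    exact (sum_lt_sum (fun β _ => hle β) ⟨α, mem_univ α, hα⟩).ne hsum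
  have hβ₀T : β₀ ∉ T := fun h => (hgain β₀ h).not_gt hβ₀
  have hTcard : #T ≤ Fintype.card C - 1 := by
    rw [← card_univ, ← card_erase_of_mem (mem_univ β₀)]
    exact card_le_card fun γ hγ => mem_erase.2 ⟨fun h => hβ₀T (h ▸ hγ), mem_univ γ⟩
  have hTpos : 0 < #T := card_pos.2 ⟨α, hαT⟩
  have hmono : ∀ j ≤ #T, sumSmallest j ω ≤ sumSmallest j ω' := by
    intro j hj
    obtain ⟨V, hVT, hV, hmin⟩ := exists_subset_sum_eq_sumSmallest hT hTc hj
    rw [← hmin]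
    exact (sumSmallest_le_sum hV).trans (sum_le_sum fun γ hγ => hgain γ (hVT hγ))
  rw [potential_sub_potential]
  refine le_sum_range_mul_geom hA (sum_nonneg fun β _ => abs_nonneg _) hL
    (p := Fintype.card C - 1 - #T) (by omega) (fun i hi => ?_) ?_ (fun i hi him => ?_)
  · linarith [sumSmallest_sub_sumSmallest_le (ω := ω) (ω' := ω') (j := Fintype.card C - 1 - i)
      (by omega), sum_max_sub_eq_half hsum]
  · obtain ⟨V, hVT, hV, hmin⟩ := exists_subset_sum_eq_sumSmallest hT hTc le_rfl
    obtain rfl : V = T := eq_of_subset_of_card_le hVT hV.ge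
    have hT' : Fintype.card C - 1 - (Fintype.card C - 1 - #T) = #T := by omega
    rw [hT', ← hmin]
    have hsingle : ω' α - ω α ≤ ∑ γ ∈ T, (ω' γ - ω γ) :=
      single_le_sum (f := fun γ => ω' γ - ω γ) (fun γ hγ => sub_nonneg.2 (hgain γ hγ)) hαT
    rw [sum_sub_distrib] at hsingle
    linarith [sumSmallest_le_sum (ω := ω) (rfl : #T = #T)]
  · exact sub_nonneg.2 (hmono _ (by omega))

theorem potential_sub_potential_le [Nonempty C] {d : ℝ} (hA : 0 < A) (hd : 0 ≤ d) {m : ℕ}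
    (hm : m ≤ Fintype.card C) (hsum : ∑ β, ω' β = 1)
    (hω : ∀ β, 1 / (Fintype.card C : ℝ) - d ≤ ω β) :
    potential A m ω' - potential A m ω ≤ (1 + A) ^ (m + 1) / A * d := by
  have hcard : (0 : ℝ) < Fintype.card C := by exact_mod_cast Fintype.card_pos
  have hterm : ∀ i ∈ range m,
      sumSmallest (m - i) ω' - sumSmallest (m - i) ω ≤ ((m - i : ℕ) : ℝ) * d := by
    intro i _
    have hup : sumSmallest (m - i) ω' ≤ ((m - i : ℕ) : ℝ) / Fintype.card C := by
      rw [le_div_iff₀ hcard, mul_comm]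
      simpa [hsum] using card_mul_sumSmallest_le ω' (j := m - i) (by omega)
    have hlow := mul_le_sumSmallest (j := m - i) (by omega) hω
    rw [mul_sub, mul_one_div] at hlow
    linarith
  set G := ∑ i ∈ range m, ((m - i : ℕ) : ℝ) * (1 + A) ^ i
  have hG : A ^ 2 * G ≤ (1 + A) ^ (m + 1) := by
    have := sq_mul_sum_range_add A m
    nlinarith
  calc potential A m ω' - potential A m ω
        ≤ ∑ i ∈ range m, A * (1 + A) ^ i * ((m - i : ℕ) * d) := by
        rw [potential_sub_potential]
        exact sum_le_sum fun i hi => mul_le_mul_of_nonneg_left (hterm i hi) (by positivity)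
    _ = A * G * d := by
        simp only [G, mul_sum, sum_mul]
        exact sum_congr rfl fun i _ => by ring
    _ ≤ (1 + A) ^ (m + 1) / A * d := by
        gcongr
        rw [le_div_iff₀ hA]
        nlinarith

end potential

theorem stmt_2_general {C : Type*} [Fintype C] [Nonempty C] {k : ℕ} (hk : Fintype.card C = k)
    (ω : ℕ → C → ℝ)
    (hdist : ∀ n, (∀ α, 0 ≤ ω n α ∧ ω n α ≤ 1) ∧ ∑ α, ω n α = 1)
    (hstep : ∀ n, ω (n + 1) = ω n ∨
      ∃ α, ω n α < ω (n + 1) α ∧ ∀ β, ω (n + 1) β < ω n β → ω (n + 1) α ≤ ω (n + 1) β)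
    (A : ℝ) (hA : 1 ≤ A)
    (hbound : ∀ n α, ω n α < ω (n + 1) α →
      ∑ β, |ω (n + 1) β - ω n β| ≤ A * (ω (n + 1) α - ω n α)) :
    Summable (fun n => ∑ β, |ω (n + 1) β - ω n β|) ∧
    ∑' n, (∑ β, |ω (n + 1) β - ω n β|) ≤
      ((1 + A) ^ (k + 1) / A) *
        (Finset.univ.sup' Finset.univ_nonempty fun α => |ω 0 α - 1 / (k : ℝ)|) := by
  subst hk
  set disc := univ.sup' univ_nonempty fun α => |ω 0 α - 1 / (Fintype.card C : ℝ)|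
  have hdisc : ∀ β, |ω 0 β - 1 / (Fintype.card C : ℝ)| ≤ disc := fun β =>
    le_sup' (fun α => |ω 0 α - 1 / (Fintype.card C : ℝ)|) (mem_univ β)
  have hdisc0 : 0 ≤ disc := (abs_nonneg _).trans (hdisc (Classical.arbitrary C))
  refine summable_and_tsum_le_of_le_sub (fun n => sum_nonneg fun β _ => abs_nonneg _)
    (Ψ := fun n => potential A (Fintype.card C - 1) (ω n)) (fun n => ?_) (fun n => ?_)
  · rcases hstep n with h | ⟨α, hα, hmore⟩
    · simp [h]
    · exact le_potential_sub_potential (by linarith) ((hdist n).2.trans (hdist (n + 1)).2.symm)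
        hα hmore (hbound n α hα)
  · calc potential A (Fintype.card C - 1) (ω n) - potential A (Fintype.card C - 1) (ω 0)
        ≤ (1 + A) ^ (Fintype.card C - 1 + 1) / A * disc :=
          potential_sub_potential_le (by linarith) hdisc0 (Nat.sub_le _ _) (hdist n).2
            fun β => by linarith [(abs_le.1 (hdisc β)).1]
      _ ≤ (1 + A) ^ (Fintype.card C + 1) / A * disc := by
          gcongr
          · linarith
          · omega

/-- If (ωₙ) is a sequence of distributions on a set of size k, each step being
either constant or more equitable, and each step's ℓ¹-size is at most A times the gain of some
color in D⁺, then the total ℓ¹-variation is at most ((1+A)^(k+1)/A)·disc(ω₀). -/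
theorem stmt_2 {C : Type*} [Fintype C] [Nonempty C] {k : ℕ} (hk : Fintype.card C = k)
    (hk1 : 1 ≤ k)
    (ω : ℕ → C → ℝ)
    (hdist : ∀ n, (∀ α, 0 ≤ ω n α ∧ ω n α ≤ 1) ∧ ∑ α, ω n α = 1)
    (hstep : ∀ n, ω (n + 1) = ω n ∨
      ∃ α, ω n α < ω (n + 1) α ∧ ∀ β, ω (n + 1) β < ω n β → ω (n + 1) α ≤ ω (n + 1) β)
    (A : ℝ) (hA : 1 ≤ A)
    (hbound : ∀ n α, ω n α < ω (n + 1) α →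
      ∑ β, |ω (n + 1) β - ω n β| ≤ A * (ω (n + 1) α - ω n α)) :
    Summable (fun n => ∑ β, |ω (n + 1) β - ω n β|) ∧
    ∑' n, (∑ β, |ω (n + 1) β - ω n β|) ≤
      ((1 + A) ^ (k + 1) / A) *
        (Finset.univ.sup' Finset.univ_nonempty fun α => |ω 0 α - 1 / (k : ℝ)|) :=
  stmt_2_general hk ω hdist hstep A hA hbound
end

section
/- Let C be a finite set, let ω : C → ℝ, let α ≠ β be elements of C, and let 0 ≤ d ≤ (ω(β) − ω(α))/2. Define ω' : C → ℝ by ω'(α) = ω(α) + d, ω'(β) = ω(β) − d, and ω'(γ) = ω(γ) for γ ∉ {α, β}. Then (1/2)·∑_{γ∈C} ∑_{δ∈C} |ω'(γ) − ω'(δ)| ≤ (1/2)·∑_{γ∈C} ∑_{δ∈C} |ω(γ) − ω(δ)| − 2d. -/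
lemma stmt4_key (a b x d : ℝ) (hd : 0 ≤ d) (h : a + d ≤ b - d) :
    |x - (a + d)| + |x - (b - d)| ≤ |x - a| + |x - b| := by
  rcases abs_cases (x - (a + d)) with ⟨h1, h1'⟩ | ⟨h1, h1'⟩ <;>
  rcases abs_cases (x - (b - d)) with ⟨h2, h2'⟩ | ⟨h2, h2'⟩ <;>
  rcases abs_cases (x - a) with ⟨h3, h3'⟩ | ⟨h3, h3'⟩ <;>
  rcases abs_cases (x - b) with ⟨h4, h4'⟩ | ⟨h4, h4'⟩ <;>
  linarith

/-- Moving mass d from a larger value ω(β) to a smaller value ω(α),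
without overshooting the midpoint, decreases the total pairwise imbalance
S(ω) = (1/2)·∑∑|ω(γ) − ω(δ)| by at least 2d. -/
theorem stmt_4 {C : Type*} [Fintype C] [DecidableEq C] (ω : C → ℝ) (α β : C) (hαβ : α ≠ β)
    (d : ℝ) (h0 : 0 ≤ d) (h1 : d ≤ (ω β - ω α) / 2)
    (ω' : C → ℝ)
    (hω' : ω' = fun γ => if γ = α then ω α + d else if γ = β then ω β - d else ω γ) :
    (1 / 2) * ∑ γ, ∑ δ, |ω' γ - ω' δ| ≤ (1 / 2) * ∑ γ, ∑ δ, |ω γ - ω δ| - 2 * d := by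
  have hβα : β ≠ α := hαβ.symm
  have hA : ω' α = ω α + d := by simp [hω']
  have hB : ω' β = ω β - d := by simp [hω', hβα]
  have hO : ∀ γ, γ ≠ α → γ ≠ β → ω' γ = ω γ := by
    intro γ h1 h2; simp [hω', h1, h2]
  have hd2 : ω α + d ≤ ω β - d := by linarith
  set s : Finset C := Finset.univ \ {α, β} with hs
  have hmem : ∀ γ ∈ s, γ ≠ α ∧ γ ≠ β := by
    intro γ hγ
    simp only [hs, Finset.mem_sdiff, Finset.mem_insert, Finset.mem_singleton] at hγ
    exact ⟨fun h => hγ.2 (Or.inl h), fun h => hγ.2 (Or.inr h)⟩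
  have hsub : ({α, β} : Finset C) ⊆ Finset.univ := Finset.subset_univ _
  have hsplit : ∀ g : C → ℝ, ∑ x, g x = ∑ x ∈ s, g x + (g α + g β) := by
    intro g
    rw [← Finset.sum_sdiff hsub, Finset.sum_pair hαβ]
  have expand : ∀ f : C → C → ℝ,
      ∑ γ, ∑ δ, f γ δ =
        ∑ γ ∈ s, ∑ δ ∈ s, f γ δ
        + ∑ γ ∈ s, (f γ α + f γ β)
        + ∑ δ ∈ s, (f α δ + f β δ)
        + (f α α + f α β + f β α + f β β) := by
    intro f
    rw [hsplit (fun γ => ∑ δ, f γ δ)]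
    simp only [hsplit (f α), hsplit (f β)]
    rw [show ∑ γ ∈ s, ∑ δ, f γ δ = ∑ γ ∈ s, (∑ δ ∈ s, f γ δ + (f γ α + f γ β)) from
      Finset.sum_congr rfl fun γ _ => hsplit (f γ)]
    rw [Finset.sum_add_distrib, Finset.sum_add_distrib (f := fun δ => f α δ)]
    ring
  rw [expand (fun γ δ => |ω' γ - ω' δ|), expand (fun γ δ => |ω γ - ω δ|)]
  have e1 : ∑ γ ∈ s, ∑ δ ∈ s, |ω' γ - ω' δ| = ∑ γ ∈ s, ∑ δ ∈ s, |ω γ - ω δ| := by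
    refine Finset.sum_congr rfl fun γ hγ => Finset.sum_congr rfl fun δ hδ => ?_
    rw [hO γ (hmem γ hγ).1 (hmem γ hγ).2, hO δ (hmem δ hδ).1 (hmem δ hδ).2]
  have e2 : ∑ γ ∈ s, (|ω' γ - ω' α| + |ω' γ - ω' β|)
      ≤ ∑ γ ∈ s, (|ω γ - ω α| + |ω γ - ω β|) := by
    refine Finset.sum_le_sum fun γ hγ => ?_
    rw [hO γ (hmem γ hγ).1 (hmem γ hγ).2, hA, hB]
    exact stmt4_key _ _ _ _ h0 hd2
  have e3 : ∑ δ ∈ s, (|ω' α - ω' δ| + |ω' β - ω' δ|)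
      ≤ ∑ δ ∈ s, (|ω α - ω δ| + |ω β - ω δ|) := by
    refine Finset.sum_le_sum fun δ hδ => ?_
    rw [hO δ (hmem δ hδ).1 (hmem δ hδ).2, hA, hB, abs_sub_comm (ω α + d),
      abs_sub_comm (ω β - d), abs_sub_comm (ω α), abs_sub_comm (ω β)]
    exact stmt4_key _ _ _ _ h0 hd2
  have e4 : |ω' α - ω' β| = |ω α - ω β| - 2 * d := by
    rw [hA, hB, abs_of_nonpos (by linarith), abs_of_nonpos (by linarith)]
    ring
  have e5 : |ω' β - ω' α| = |ω β - ω α| - 2 * d := by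
    rw [hA, hB, abs_of_nonneg (by linarith), abs_of_nonneg (by linarith)]
    ring
  simp only [sub_self, abs_zero, e1, e4, e5]
  linarith
end

section
/- Let G be a connected finite graph and L a list assignment with |L(x)| ≥ deg_G(x) for all x ∈ V(G). Let g be a proper partial L-coloring of G. Then for every vertex u ∈ V(G), there exists a proper partial L-coloring f of G with dom(f) ⊇ V(G) \ {u} and such that f dominates g, i.e. |f⁻¹(α)| ≥ |g⁻¹(α)| for every color α. -/
/-!
Induct on the potential `∑ dist x u` over the uncoloured vertices `x`. Take an uncoloured
`w ≠ u`. If some colour of `L w` is missing from the neighbourhood of `w`, colour `w` with it.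
Otherwise the `deg w ≤ |L w|` neighbours of `w` carry all colours of `L w`, so each neighbour
carries its own colour; `w` then takes the colour of a neighbour `v` closer to `u`, which loses
it. Either way the colour classes do not shrink and the potential drops.
-/

open Finset Function

section PartialColoring

variable {V C : Type*}

def IsPartialListColoring (L : V → Finset C) (f : V → Option C) : Prop :=
  ∀ x c, f x = some c → c ∈ L x

def IsProperPartialColoring (G : SimpleGraph V) (f : V → Option C) : Prop :=
  ∀ x y, G.Adj x y → ∀ c : C, f x = some c → f y ≠ some c

def uncolored [Fintype V] (f : V → Option C) : Finset V :=
  univ.filter fun x => f x = none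

def colorClass [Fintype V] [DecidableEq C] (f : V → Option C) (α : C) : Finset V :=
  univ.filter fun x => f x = some α

def Dominates [Fintype V] [DecidableEq C] (f g : V → Option C) : Prop :=
  ∀ α, #(colorClass g α) ≤ #(colorClass f α)

theorem Dominates.trans [Fintype V] [DecidableEq C] {f g h : V → Option C}
    (hfg : Dominates f g) (hgh : Dominates g h) : Dominates f h :=
  fun α => (hgh α).trans (hfg α)

theorem dominates_comp_perm [Fintype V] [DecidableEq C] (f : V → Option C) (σ : Equiv.Perm V) :
    Dominates (f ∘ σ) f :=
  fun α => (card_equiv σ fun x => by simp [colorClass]).ge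

variable [DecidableEq V] {L : V → Finset C} {G : SimpleGraph V} {f : V → Option C}

theorem IsPartialListColoring.update_none (hf : IsPartialListColoring L f) (v : V) :
    IsPartialListColoring L (update f v none) := by
  intro x c hx
  by_cases hxv : x = v
  · simp [hxv] at hx
  · exact hf x c (by rwa [update_of_ne hxv] at hx)

theorem IsPartialListColoring.update_some (hf : IsPartialListColoring L f) {w : V} {c : C}
    (hc : c ∈ L w) : IsPartialListColoring L (update f w (some c)) := by
  intro x c' hx
  by_cases hxw : x = w
  · subst hxw
    simp_all
  · exact hf x c' (by rwa [update_of_ne hxw] at hx)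

theorem IsProperPartialColoring.update_none (hf : IsProperPartialColoring G f) (v : V) :
    IsProperPartialColoring G (update f v none) := by
  intro x y hxy c hx hy
  by_cases hxv : x = v
  · simp [hxv] at hx
  by_cases hyv : y = v
  · simp [hyv] at hy
  rw [update_of_ne hxv] at hx
  rw [update_of_ne hyv] at hy
  exact hf x y hxy c hx hy

theorem IsProperPartialColoring.update_some (hf : IsProperPartialColoring G f) {w : V} {c : C}
    (hfree : ∀ y, G.Adj w y → f y ≠ some c) :
    IsProperPartialColoring G (update f w (some c)) := by
  intro x y hxy c' hx hy
  by_cases hxw : x = w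
  · subst hxw
    rw [update_self, Option.some_inj] at hx
    subst hx
    exact hfree y hxy (by rwa [update_of_ne hxy.ne'] at hy)
  rw [update_of_ne hxw] at hx
  by_cases hyw : y = w
  · subst hyw
    rw [update_self, Option.some_inj] at hy
    subst hy
    exact hfree x hxy.symm hx
  rw [update_of_ne hyw] at hy
  exact hf x y hxy c' hx hy

variable [Fintype V]

theorem uncolored_update_some (w : V) (c : C) :
    uncolored (update f w (some c)) = (uncolored f).erase w := by
  ext x
  by_cases hxw : x = w <;> simp [uncolored, update_apply, hxw]

theorem uncolored_update_none (v : V) : uncolored (update f v none) = insert v (uncolored f) := by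
  ext x
  by_cases hxv : x = v <;> simp [uncolored, update_apply, hxv]

theorem dominates_update_of_eq_none [DecidableEq C] {w : V} (hw : f w = none) (c : Option C) :
    Dominates (update f w c) f := by
  refine fun α => card_le_card fun x hx => ?_
  have hxw : x ≠ w := by rintro rfl; simp_all [colorClass]
  simp_all [colorClass]

end PartialColoring

namespace SimpleGraph

variable {V C : Type*} {G : SimpleGraph V}

theorem Connected.exists_adj_dist_lt (hconn : G.Connected) {w u : V} (hwu : w ≠ u) :
    ∃ v, G.Adj w v ∧ G.dist v u < G.dist w u := by
  obtain ⟨p, hp⟩ := hconn.exists_walk_length_eq_dist w u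
  cases p with
  | nil => exact absurd rfl hwu
  | cons hadj q =>
    refine ⟨_, hadj, (dist_le q).trans_lt ?_⟩
    rw [Walk.length_cons] at hp
    omega

variable [DecidableEq V] in
theorem sum_dist_lt_of_subset_insert_erase {s t : Finset V} {u v w : V} (hw : w ∈ s)
    (hvw : G.dist v u < G.dist w u) (hts : t ⊆ insert v (s.erase w)) :
    ∑ x ∈ t, G.dist x u < ∑ x ∈ s, G.dist x u :=
  calc ∑ x ∈ t, G.dist x u
      ≤ ∑ x ∈ insert v (s.erase w), G.dist x u := sum_le_sum_of_subset hts
    _ ≤ G.dist v u + ∑ x ∈ s.erase w, G.dist x u := by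
        by_cases hv : v ∈ s.erase w
        · rw [insert_eq_of_mem hv]
          exact le_add_self
        · rw [sum_insert hv]
    _ < G.dist w u + ∑ x ∈ s.erase w, G.dist x u := by gcongr
    _ = ∑ x ∈ s, G.dist x u := add_sum_erase s (G.dist · u) hw

variable [Fintype V] [DecidableRel G.Adj] [DecidableEq C] {L : V → Finset C} {g : V → Option C}

theorem exists_color_unique_on_neighbors {w v : V}
    (hfull : ∀ c ∈ L w, ∃ y, G.Adj w y ∧ g y = some c) (hdeg : G.degree w ≤ #(L w))
    (hv : G.Adj w v) :
    ∃ α ∈ L w, g v = some α ∧ ∀ y, G.Adj w y → g y = some α → y = v := by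
  set N := G.neighborFinset w
  have hsub : (L w).map .some ⊆ N.image g := by
    intro o ho
    obtain ⟨c, hc, rfl⟩ := mem_map.mp ho
    obtain ⟨y, hy, hyc⟩ := hfull c hc
    exact mem_image.mpr ⟨y, (G.mem_neighborFinset w y).mpr hy, hyc⟩
  have hN : #N ≤ #((L w).map .some) := by simpa [N] using hdeg
  have hinj : Set.InjOn g N :=
    card_image_iff.mp <| card_image_le.antisymm <| hN.trans (card_le_card hsub)
  have himage : (L w).map .some = N.image g :=
    eq_of_subset_of_card_le hsub (card_image_le.trans hN)
  have hvN : v ∈ N := (G.mem_neighborFinset w v).mpr hv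
  obtain ⟨α, hα, hvα⟩ := mem_map.mp (himage ▸ mem_image_of_mem g hvN)
  refine ⟨α, hα, hvα.symm, fun y hy hyα => hinj ?_ hvN (hyα.trans hvα)⟩
  exact (G.mem_neighborFinset w y).mpr hy

variable [DecidableEq V]

theorem Connected.exists_dominating_step (hconn : G.Connected) (hL : ∀ x, G.degree x ≤ #(L x))
    (hgL : IsPartialListColoring L g) (hg : IsProperPartialColoring G g)
    {u w : V} (hw : g w = none) (hwu : w ≠ u) :
    ∃ g', IsPartialListColoring L g' ∧ IsProperPartialColoring G g' ∧ Dominates g' g ∧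
      ∃ v, G.dist v u < G.dist w u ∧ uncolored g' ⊆ insert v ((uncolored g).erase w) := by
  obtain ⟨v, hwv, hvu⟩ := hconn.exists_adj_dist_lt hwu
  by_cases hfree : ∃ c ∈ L w, ∀ y, G.Adj w y → g y ≠ some c
  · obtain ⟨c, hc, hcfree⟩ := hfree
    refine ⟨update g w (some c), hgL.update_some hc, hg.update_some hcfree,
      dominates_update_of_eq_none hw _, v, hvu, ?_⟩
    rw [uncolored_update_some]
    exact subset_insert _ _
  push Not at hfree
  obtain ⟨α, hα, hvα, huniq⟩ := exists_color_unique_on_neighbors hfree (hL w) hwv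
  have hfree' : ∀ y, G.Adj w y → update g v none y ≠ some α := by
    intro y hy hyα
    by_cases hyv : y = v
    · simp [hyv] at hyα
    · exact hyv (huniq y hy (by rwa [update_of_ne hyv] at hyα))
  have hswap : g ∘ Equiv.swap w v = update (update g v none) w (some α) := by
    rw [Equiv.comp_swap_eq_update, hw, hvα]
  refine ⟨_, (hgL.update_none v).update_some hα, (hg.update_none v).update_some hfree',
    hswap ▸ dominates_comp_perm g _, v, hvu, ?_⟩
  rw [uncolored_update_some, uncolored_update_none, erase_insert_of_ne hwv.ne']

theorem Connected.exists_dominating_coloring (hconn : G.Connected)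
    (hL : ∀ x, G.degree x ≤ #(L x)) (u : V) (hgL : IsPartialListColoring L g)
    (hg : IsProperPartialColoring G g) :
    ∃ f, IsPartialListColoring L f ∧ IsProperPartialColoring G f ∧
      uncolored f ⊆ {u} ∧ Dominates f g := by
  induction hn : ∑ x ∈ uncolored g, G.dist x u using Nat.strong_induction_on generalizing g with
  | _ n ih =>
  by_cases hdone : uncolored g ⊆ {u}
  · exact ⟨g, hgL, hg, hdone, fun _ => le_rfl⟩
  obtain ⟨w, hw, hwu⟩ := not_subset.mp hdone
  obtain ⟨g', hg'L, hg', hdom, v, hvw, hsub⟩ :=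
    hconn.exists_dominating_step hL hgL hg (mem_filter.mp hw).2 (by simpa using hwu)
  obtain ⟨f, hfL, hf, hfu, hfdom⟩ :=
    ih _ (hn ▸ sum_dist_lt_of_subset_insert_erase hw hvw hsub) hg'L hg' rfl
  exact ⟨f, hfL, hf, hfu, hfdom.trans hdom⟩

end SimpleGraph

/-- Let G be a connected finite graph, L a degree-list assignment, g a proper
partial L-coloring. Then for every vertex u there is a proper partial L-coloring f defined
on all of V(G) except possibly u which dominates g. -/
theorem stmt_9 {V C : Type*} [Fintype V] [DecidableEq V] [DecidableEq C]
    (G : SimpleGraph V) [DecidableRel G.Adj] (hconn : G.Connected)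
    (L : V → Finset C) (hL : ∀ x, G.degree x ≤ (L x).card)
    (g : V → Option C)
    (hgL : ∀ x c, g x = some c → c ∈ L x)
    (hgproper : ∀ x y, G.Adj x y → ∀ c : C, g x = some c → g y ≠ some c)
    (u : V) :
    ∃ f : V → Option C,
      (∀ x c, f x = some c → c ∈ L x) ∧
      (∀ x y, G.Adj x y → ∀ c : C, f x = some c → f y ≠ some c) ∧
      (∀ x, x ≠ u → (f x).isSome) ∧
      (∀ α : C, (Finset.univ.filter fun x => g x = some α).card ≤
        (Finset.univ.filter fun x => f x = some α).card) := by
  obtain ⟨f, hfL, hf, hfu, hdom⟩ := hconn.exists_dominating_coloring hL u hgL hgproper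
  refine ⟨f, hfL, hf, fun x hxu => ?_, hdom⟩
  by_contra hx
  exact hxu (mem_singleton.mp (hfu (by simpa [uncolored] using hx)))
end

section
/- Let G be a finite graph and t ≥ 0 a real number. Then there exists a set X ⊆ V(G) such that: (1) every vertex y ∉ X has deg_G(y) < 2t; (2) every vertex y ∉ X satisfies |N_G(y) \ X| < t; and (3) for every subset X' ⊆ X, the number of edges of G incident to at least one vertex of X' is at least t·|X'|. -/
open scoped Classical

section Aux

variable {V : Type*} [Fintype V] [DecidableEq V]

/-- Double counting: the sum of degrees over `A` is at most twice the number of edges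
incident to `A`. -/
lemma aux13_half_count (G : SimpleGraph V) [DecidableRel G.Adj] (A : Finset V) :
    ∑ x ∈ A, G.degree x ≤ 2 * (G.edgeFinset.filter fun e => ∃ x ∈ A, x ∈ e).card := by
  classical
  set E' := G.edgeFinset.filter fun e => ∃ x ∈ A, x ∈ e with hE'
  set P : Finset ((_ : V) × V) := A.sigma fun x => G.neighborFinset x with hP
  have hcard : P.card = ∑ x ∈ A, G.degree x := by
    rw [hP, Finset.card_sigma]
    rfl
  have hmaps : ∀ p ∈ P, s(p.1, p.2) ∈ E' := by
    intro p hp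
    simp only [hP, Finset.mem_sigma, SimpleGraph.mem_neighborFinset] at hp
    refine Finset.mem_filter.mpr ⟨SimpleGraph.mem_edgeFinset.mpr hp.2, p.1, hp.1, ?_⟩
    exact Sym2.mem_mk_left _ _
  have hfib : ∀ e ∈ E', (P.filter fun p => s(p.1, p.2) = e).card ≤ 2 := by
    intro e _
    induction e using Sym2.ind with
    | _ u v =>
      have hsub : (P.filter fun p => s(p.1, p.2) = s(u, v)) ⊆
          ({⟨u, v⟩, ⟨v, u⟩} : Finset ((_ : V) × V)) := by
        intro p hp
        have hp2 := (Finset.mem_filter.mp hp).2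
        rw [Sym2.eq_iff] at hp2
        rcases hp2 with ⟨h1, h2⟩ | ⟨h1, h2⟩
        · simp [Finset.mem_insert, Sigma.ext_iff, h1, h2]
        · simp [Finset.mem_insert, Sigma.ext_iff, h1, h2]
      calc (P.filter fun p => s(p.1, p.2) = s(u, v)).card
          ≤ ({⟨u, v⟩, ⟨v, u⟩} : Finset ((_ : V) × V)).card := Finset.card_le_card hsub
        _ ≤ 2 := by
            refine (Finset.card_insert_le _ _).trans ?_
            simp
  calc ∑ x ∈ A, G.degree x = P.card := hcard.symm
    _ ≤ 2 * E'.card := Finset.card_le_mul_card_image_of_maps_to hmaps 2 hfib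

/-- Removing a vertex `x` from `A` loses at least `|N(x) \ A|` incident edges. -/
lemma aux13_erase_count (G : SimpleGraph V) [DecidableRel G.Adj] (A : Finset V) (x : V)
    (hx : x ∈ A) :
    (G.edgeFinset.filter fun e => ∃ y ∈ A.erase x, y ∈ e).card
      + (G.neighborFinset x \ A).card
      ≤ (G.edgeFinset.filter fun e => ∃ y ∈ A, y ∈ e).card := by
  classical
  set E₁ := G.edgeFinset.filter fun e => ∃ y ∈ A.erase x, y ∈ e with hE₁
  set F := (G.neighborFinset x \ A).image fun z => s(x, z) with hF
  have hFcard : F.card = (G.neighborFinset x \ A).card := by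
    refine Finset.card_image_of_injOn ?_
    intro a _ b _ hab
    exact Sym2.congr_right.mp hab
  have hdisj : Disjoint E₁ F := by
    rw [Finset.disjoint_right]
    intro e heF heE
    obtain ⟨z, hz, rfl⟩ := Finset.mem_image.mp heF
    obtain ⟨-, y, hy, hye⟩ := Finset.mem_filter.mp heE
    rw [Sym2.mem_iff] at hye
    rcases hye with rfl | rfl
    · exact (Finset.mem_erase.mp hy).1 rfl
    · exact (Finset.mem_sdiff.mp hz).2 (Finset.mem_erase.mp hy).2
  have hsub : E₁ ∪ F ⊆ G.edgeFinset.filter fun e => ∃ y ∈ A, y ∈ e := by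
    intro e he
    rcases Finset.mem_union.mp he with he | he
    · obtain ⟨h1, y, hy, h2⟩ := Finset.mem_filter.mp he
      exact Finset.mem_filter.mpr ⟨h1, y, Finset.mem_of_mem_erase hy, h2⟩
    · obtain ⟨z, hz, rfl⟩ := Finset.mem_image.mp he
      have hadj : G.Adj x z := by
        have h := (Finset.mem_sdiff.mp hz).1
        rwa [SimpleGraph.mem_neighborFinset] at h
      exact Finset.mem_filter.mpr
        ⟨SimpleGraph.mem_edgeFinset.mpr hadj, x, hx, Sym2.mem_mk_left _ _⟩
  calc E₁.card + (G.neighborFinset x \ A).card = E₁.card + F.card := by rw [hFcard]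
    _ = (E₁ ∪ F).card := (Finset.card_union_of_disjoint hdisj).symm
    _ ≤ _ := Finset.card_le_card hsub

/-- The key invariant of the set under construction: every nonempty subset either consists of
high degree vertices only, or contains a vertex with at least `t` neighbors outside it. -/
def Aux13Q (G : SimpleGraph V) [DecidableRel G.Adj] (t : ℝ) (S : Finset V) : Prop :=
  ∀ T ⊆ S, T.Nonempty →
    (∀ x ∈ T, 2 * t ≤ (G.degree x : ℝ)) ∨
      ∃ x ∈ T, t ≤ ((G.neighborFinset x \ T).card : ℝ)

lemma aux13_build (G : SimpleGraph V) [DecidableRel G.Adj] (t : ℝ) :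
    ∀ n (S : Finset V), Aux13Q G t S → (Finset.univ \ S).card ≤ n →
      ∃ X, S ⊆ X ∧ Aux13Q G t X ∧
        ∀ y ∉ X, ((G.neighborFinset y \ X).card : ℝ) < t := by
  intro n
  induction n with
  | zero =>
    intro S hQ hc
    refine ⟨S, le_refl _, hQ, ?_⟩
    intro y hy
    exfalso
    have : y ∈ Finset.univ \ S := Finset.mem_sdiff.mpr ⟨Finset.mem_univ _, hy⟩
    have : (Finset.univ \ S).Nonempty := ⟨y, this⟩
    have := Finset.card_pos.mpr this
    omega
  | succ n ih =>
    intro S hQ hc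
    by_cases h : ∀ y ∉ S, ((G.neighborFinset y \ S).card : ℝ) < t
    · exact ⟨S, le_refl _, hQ, h⟩
    · push_neg at h
      obtain ⟨y, hyS, hyt⟩ := h
      have hQ' : Aux13Q G t (insert y S) := by
        intro T hT hTne
        by_cases hyT : y ∈ T
        · right
          refine ⟨y, hyT, ?_⟩
          refine hyt.trans ?_
          have hsub : G.neighborFinset y \ S ⊆ G.neighborFinset y \ T := by
            intro z hz
            obtain ⟨hz1, hz2⟩ := Finset.mem_sdiff.mp hz
            refine Finset.mem_sdiff.mpr ⟨hz1, fun hzT => ?_⟩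
            rcases Finset.mem_insert.mp (hT hzT) with rfl | hzS
            · exact absurd hz1 (SimpleGraph.notMem_neighborFinset_self G _)
            · exact hz2 hzS
          exact_mod_cast Nat.cast_le.mpr (Finset.card_le_card hsub)
        · refine hQ T ?_ hTne
          intro z hzT
          rcases Finset.mem_insert.mp (hT hzT) with rfl | hzS
          · exact absurd hzT hyT
          · exact hzS
      have hcard : (Finset.univ \ insert y S).card ≤ n := by
        have hlt : (Finset.univ \ insert y S).card < (Finset.univ \ S).card := by
          refine Finset.card_lt_card ?_
          refine Finset.ssubset_iff_of_subset ?_ |>.mpr ⟨y, ?_, ?_⟩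
          · exact Finset.sdiff_subset_sdiff (le_refl _) (Finset.subset_insert _ _)
          · exact Finset.mem_sdiff.mpr ⟨Finset.mem_univ _, hyS⟩
          · simp
        omega
      obtain ⟨X, hSX, hQX, hout⟩ := ih (insert y S) hQ' hcard
      exact ⟨X, (Finset.subset_insert _ _).trans hSX, hQX, hout⟩

end Aux

/-- For every finite graph G and t ≥ 0 there is a set X of vertices such
that every vertex outside X has degree < 2t and fewer than t neighbors outside X, while every
subset X' ⊆ X is incident to at least t·|X'| edges. -/
theorem stmt_13 {V : Type*} [Fintype V] [DecidableEq V]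
    (G : SimpleGraph V) [DecidableRel G.Adj]
    (t : ℝ) (ht : 0 ≤ t) :
    ∃ X : Finset V,
      (∀ y ∉ X, (G.degree y : ℝ) < 2 * t) ∧
      (∀ y ∉ X, ((G.neighborFinset y \ X).card : ℝ) < t) ∧
      (∀ X' ⊆ X, t * (X'.card : ℝ) ≤
        ((G.edgeFinset.filter fun e => ∃ x ∈ X', x ∈ e).card : ℝ)) := by
  classical
  set X₀ : Finset V := Finset.univ.filter (fun x => 2 * t ≤ (G.degree x : ℝ)) with hX₀
  have hQ₀ : Aux13Q G t X₀ := by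
    intro T hT _
    left
    intro x hx
    exact (Finset.mem_filter.mp (hT hx)).2
  obtain ⟨X, hSX, hQX, hout⟩ := aux13_build G t (Finset.univ \ X₀).card X₀ hQ₀ le_rfl
  refine ⟨X, ?_, hout, ?_⟩
  · intro y hy
    by_contra hcon
    push_neg at hcon
    exact hy (hSX (Finset.mem_filter.mpr ⟨Finset.mem_univ _, hcon⟩))
  · have key : ∀ n (X' : Finset V), X'.card ≤ n → X' ⊆ X →
        t * (X'.card : ℝ) ≤
          ((G.edgeFinset.filter fun e => ∃ x ∈ X', x ∈ e).card : ℝ) := by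
      intro n
      induction n with
      | zero =>
        intro X' hc _
        have : X' = ∅ := Finset.card_eq_zero.mp (Nat.le_zero.mp hc)
        subst this
        simp
      | succ n ih =>
        intro X' hc hsub
        rcases X'.eq_empty_or_nonempty with rfl | hne
        · simp
        rcases hQX X' hsub hne with hall | ⟨x, hx, hxt⟩
        · -- all vertices of X' have degree at least 2t
          have h2 := aux13_half_count G X'
          have hsum : (X'.card : ℝ) * (2 * t) ≤ ∑ x ∈ X', (G.degree x : ℝ) := by
            have := Finset.card_nsmul_le_sum X' (fun x => (G.degree x : ℝ)) (2 * t) hall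
            simpa [nsmul_eq_mul] using this
          have hcast : (∑ x ∈ X', (G.degree x : ℝ)) =
              ((∑ x ∈ X', G.degree x : ℕ) : ℝ) := by push_cast; ring_nf
          have h2' : ((∑ x ∈ X', G.degree x : ℕ) : ℝ) ≤
              2 * ((G.edgeFinset.filter fun e => ∃ x ∈ X', x ∈ e).card : ℝ) := by
            exact_mod_cast h2
          nlinarith [hsum, hcast, h2']
        · -- X' contains a vertex with at least t neighbors outside X'
          have h1 := aux13_erase_count G X' x hx
          have h2 := ih (X'.erase x)
            (by
              have := Finset.card_erase_add_one hx
              omega)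
            ((Finset.erase_subset _ _).trans hsub)
          have hcardeq : ((X'.erase x).card : ℝ) + 1 = (X'.card : ℝ) := by
            exact_mod_cast congrArg (Nat.cast (R := ℝ)) (Finset.card_erase_add_one hx)
          have h1' : ((G.edgeFinset.filter fun e => ∃ y ∈ X'.erase x, y ∈ e).card : ℝ)
              + ((G.neighborFinset x \ X').card : ℝ)
              ≤ ((G.edgeFinset.filter fun e => ∃ y ∈ X', y ∈ e).card : ℝ) := by
            exact_mod_cast h1
          have : t * (X'.card : ℝ) = t * ((X'.erase x).card : ℝ) + t := by
            rw [← hcardeq]; ring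
          rw [this]
          calc t * ((X'.erase x).card : ℝ) + t
              ≤ ((G.edgeFinset.filter fun e => ∃ y ∈ X'.erase x, y ∈ e).card : ℝ)
                + ((G.neighborFinset x \ X').card : ℝ) := add_le_add h2 hxt
            _ ≤ _ := h1'
    exact fun X' hX' => key X'.card X' le_rfl hX'
end

section
/- Let G be a finite graph with maximum degree Δ, let f be a proper k-coloring with k ≥ Δ + 1, and let y be a vertex with two distinct non-adjacent neighbors x and x' such that y is the unique neighbor of x colored f(y) and also the unique neighbor of x' colored f(y). Then there exists a color γ ≠ f(y) such that y has no neighbor of color γ other than possibly x and x'; moreover, recoloring x and x' with f(y) and recoloring y with γ yields a proper k-coloring of G. -/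
/-!
At most `deg y - 1` colours are blocked at `y`: its own colour and those of its neighbours other
than `x` and `x'`. Since `deg y ≤ Δ < k`, some colour `γ` is free. After the recolouring, the
only edges that need checking are those at `x`, `x'` and `y`. An edge `x b` with `b ≠ y` is fine
because `y` was the only neighbour of `x` coloured `f y` and `x'` is not adjacent to `x`; the
edges at `y` are fine by the choice of `γ`.
-/

open Finset

namespace SimpleGraph

variable {V C : Type*} (G : SimpleGraph V)

theorem adj_ne_of_eq_off_of_adj_ne_on {f g : V → C} {S : Set V}
    (hf : ∀ a b, G.Adj a b → f a ≠ f b) (hfg : ∀ v ∉ S, g v = f v)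
    (hS : ∀ a ∈ S, ∀ b, G.Adj a b → g a ≠ g b) : ∀ a b, G.Adj a b → g a ≠ g b := by
  intro a b hab
  by_cases ha : a ∈ S
  · exact hS a ha b hab
  by_cases hb : b ∈ S
  · exact (hS b hb a hab.symm).symm
  rw [hfg a ha, hfg b hb]
  exact hf a b hab

theorem adj_ne_of_solo_neighbor {f g : V → C} {x y : V}
    (hsolo : ∀ z, G.Adj x z → f z = f y → z = y) (hgx : g x = f y) (hgy : g y ≠ f y)
    (hg : ∀ z, G.Adj x z → z ≠ y → g z = f z) : ∀ b, G.Adj x b → g x ≠ g b := by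
  intro b hxb
  by_cases hby : b = y
  · rw [hby, hgx]
    exact hgy.symm
  rw [hgx, hg b hxb hby]
  exact fun hfb => hby (hsolo b hxb hfb.symm)

theorem exists_color_ne_of_adj_adj [Fintype V] [DecidableRel G.Adj] [Fintype C] (f : V → C)
    {y x x' : V} (hdeg : G.degree y ≤ Fintype.card C) (hxx' : x ≠ x')
    (hyx : G.Adj y x) (hyx' : G.Adj y x') :
    ∃ γ, γ ≠ f y ∧ ∀ z, G.Adj y z → z ≠ x → z ≠ x' → f z ≠ γ := by
  classical
  set blocked := insert (f y) ((G.neighborFinset y \ {x, x'}).image f)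
  have hpair : ({x, x'} : Finset V) ⊆ G.neighborFinset y := by
    simp [insert_subset_iff, hyx, hyx']
  have hsplit := card_sdiff_add_card_eq_card hpair
  rw [card_pair hxx', card_neighborFinset_eq_degree] at hsplit
  have hcard : #blocked < #(univ : Finset C) := calc
    #blocked ≤ #(G.neighborFinset y \ {x, x'}) + 1 :=
      (card_insert_le _ _).trans (Nat.add_le_add_right card_image_le 1)
    _ < #(univ : Finset C) := by rw [card_univ]; omega
  obtain ⟨γ, -, hγ⟩ := exists_mem_notMem_of_card_lt_card hcard
  refine ⟨γ, fun h => hγ (h ▸ mem_insert_self _ _), fun z hyz hzx hzx' hfz => hγ ?_⟩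
  exact mem_insert_of_mem (mem_image.2 ⟨z, by simp [hyz, hzx, hzx'], hfz⟩)

theorem adj_ne_update_solo_pair [DecidableEq V] {f : V → C}
    (hf : ∀ a b, G.Adj a b → f a ≠ f b) {y x x' : V} (hxx' : x ≠ x') (hnadj : ¬ G.Adj x x')
    (hyx : G.Adj y x) (hyx' : G.Adj y x')
    (hsolo : ∀ z, G.Adj x z → f z = f y → z = y)
    (hsolo' : ∀ z, G.Adj x' z → f z = f y → z = y)
    {γ : C} (hγ : γ ≠ f y) (hγy : ∀ z, G.Adj y z → z ≠ x → z ≠ x' → f z ≠ γ) :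
    ∀ a b, G.Adj a b →
      Function.update (Function.update (Function.update f x (f y)) x' (f y)) y γ a ≠
      Function.update (Function.update (Function.update f x (f y)) x' (f y)) y γ b := by
  set g := Function.update (Function.update (Function.update f x (f y)) x' (f y)) y γ
  have hxy : x ≠ y := hyx.ne.symm
  have hx'y : x' ≠ y := hyx'.ne.symm
  have hgy : g y = γ := Function.update_self ..
  have hgx : g x = f y := by simp [g, hxy, hxx']
  have hgx' : g x' = f y := by simp [g, hx'y]
  have hg : ∀ v ∉ ({x, x', y} : Set V), g v = f v := by
    intro v hv
    simp only [Set.mem_insert_iff, Set.mem_singleton_iff, not_or] at hv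
    simp [g, hv.1, hv.2.1, hv.2.2]
  apply G.adj_ne_of_eq_off_of_adj_ne_on hf hg
  rintro a (rfl | rfl | rfl)
  · refine G.adj_ne_of_solo_neighbor hsolo hgx (hgy ▸ hγ) fun z hxz hzy => hg z ?_
    simp only [Set.mem_insert_iff, Set.mem_singleton_iff, not_or]
    exact ⟨hxz.ne.symm, fun hzx' => hnadj (hzx' ▸ hxz), hzy⟩
  · refine G.adj_ne_of_solo_neighbor hsolo' hgx' (hgy ▸ hγ) fun z hxz hzy => hg z ?_
    simp only [Set.mem_insert_iff, Set.mem_singleton_iff, not_or]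
    exact ⟨fun hzx => hnadj (hzx ▸ hxz.symm), hxz.ne.symm, hzy⟩
  · intro b hab
    rw [hgy]
    by_cases hbx : b = x
    · rw [hbx, hgx]; exact hγ
    by_cases hbx' : b = x'
    · rw [hbx', hgx']; exact hγ
    rw [hg b (by simp [hbx, hbx', hab.ne.symm])]
    exact (hγy b hab hbx hbx').symm

end SimpleGraph

theorem stmt_16_general {V C : Type*} [Fintype V] [Fintype C] [DecidableEq V]
    (G : SimpleGraph V) [DecidableRel G.Adj]
    {k : ℕ} (hk : Fintype.card C = k) (hΔ : G.maxDegree + 1 ≤ k)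
    (f : V → C) (hf : ∀ a b, G.Adj a b → f a ≠ f b)
    (y x x' : V) (hxx' : x ≠ x') (hnadj : ¬ G.Adj x x')
    (hyx : G.Adj y x) (hyx' : G.Adj y x')
    (hsolo : ∀ z, G.Adj x z → f z = f y → z = y)
    (hsolo' : ∀ z, G.Adj x' z → f z = f y → z = y) :
    ∃ γ : C, γ ≠ f y ∧
      (∀ z, G.Adj y z → z ≠ x → z ≠ x' → f z ≠ γ) ∧
      (∀ a b, G.Adj a b →
        Function.update (Function.update (Function.update f x (f y)) x' (f y)) y γ a ≠
        Function.update (Function.update (Function.update f x (f y)) x' (f y)) y γ b) := by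
  have hdeg : G.degree y ≤ Fintype.card C := by
    have := G.degree_le_maxDegree y
    omega
  obtain ⟨γ, hγ, hγy⟩ := G.exists_color_ne_of_adj_adj f hdeg hxx' hyx hyx'
  exact ⟨γ, hγ, hγy, G.adj_ne_update_solo_pair hf hxx' hnadj hyx hyx' hsolo hsolo' hγ hγy⟩

/-- Let f be a proper k-coloring of a finite graph G with k ≥ Δ(G) + 1 and
let y have two distinct non-adjacent neighbors x, x' for each of which y is the unique
neighbor colored f(y) (a solo neighbor). Then there is a color γ ≠ f(y) such that y has no
neighbor of color γ other than possibly x and x', and recoloring x, x' with f(y) and y with γ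
yields a proper coloring. -/
theorem stmt_16 {V C : Type*} [Fintype V] [Fintype C] [DecidableEq V] [DecidableEq C]
    (G : SimpleGraph V) [DecidableRel G.Adj]
    {k : ℕ} (hk : Fintype.card C = k) (hΔ : G.maxDegree + 1 ≤ k)
    (f : V → C) (hf : ∀ a b, G.Adj a b → f a ≠ f b)
    (y x x' : V) (hxx' : x ≠ x') (hnadj : ¬ G.Adj x x')
    (hyx : G.Adj y x) (hyx' : G.Adj y x')
    (hsolo : ∀ z, G.Adj x z → f z = f y → z = y)
    (hsolo' : ∀ z, G.Adj x' z → f z = f y → z = y) :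
    ∃ γ : C, γ ≠ f y ∧
      (∀ z, G.Adj y z → z ≠ x → z ≠ x' → f z ≠ γ) ∧
      (∀ a b, G.Adj a b →
        Function.update (Function.update (Function.update f x (f y)) x' (f y)) y γ a ≠
        Function.update (Function.update (Function.update f x (f y)) x' (f y)) y γ b) :=
  stmt_16_general G hk hΔ f hf y x x' hxx' hnadj hyx hyx' hsolo hsolo'
end
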